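/- arXiv:0912.1252 — 5 statements merged into one kernel-verified Lean document; each statement's English description precedes it below -/
import Mathlib

section
/- Internal dissipation theorem, second-sound theory (Theorem 4.1): Assume the constitutive restrictions of the spatial Coleman–Noll theorem hold: ψ̄ is C¹ and independent of g, η̄ = −∂_θ ψ̄, π̄ = −∂_E ψ̄, ⟨τ̄, H F⁻¹⟩_Frob = ρ⟨∂_F ψ̄, H⟩_Frob for all H, and the reduced dissipation inequality ρθ⟨∂_q ψ̄(s), h(s)⟩ + ⟨q, g⟩ ≤ 0 holds on D. Let t ↦ (F(t), θ(t), E(t), q(t), g(t)) ∈ D be a differentiable path with q̇(t) = h(F(t), θ(t), E(t), q(t), g(t)), and let r(t) (radiant heating) and d(t) (divergence of the heat flux) be functions satisfying the energy balance ρ(t) ε̇(t) = ⟨τ(t), Ḟ(t) F(t)⁻¹⟩_Frob − d(t) + ρ(t)⟨E(t), π̇(t)⟩ + ρ(t) r(t), where ψ(t), η(t), τ(t), π(t) are the constitutive functions evaluated along the path, ε(t) = ψ(t) + θ(t)η(t) + ⟨E(t), π(t)⟩ and ρ(t) = ρ_R/det F(t). Then the internal dissipation δ₀(t) := θ(t)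 η̇(t) − r(t) + d(t)/ρ(t) satisfies δ₀(t) = −⟨∂_q ψ̄(s(t)), q̇(t)⟩ and ρ(t) θ(t) δ₀(t) ≥ ⟨q(t), g(t)⟩. -/
open Matrix

abbrev V3 : Type := Fin 3 → ℝ
abbrev Mat3 : Type := Matrix (Fin 3) (Fin 3) ℝ

noncomputable instance : NormedAddCommGroup Mat3 :=
  inferInstanceAs (NormedAddCommGroup (Fin 3 → Fin 3 → ℝ))
noncomputable instance : NormedSpace ℝ Mat3 :=
  inferInstanceAs (NormedSpace ℝ (Fin 3 → Fin 3 → ℝ))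

/-- The Frobenius inner product `⟨A, B⟩ = tr(Aᵀ B)` of 3×3 matrices. -/
noncomputable def frob (A B : Mat3) : ℝ := (Aᵀ * B).trace

/-- The `j`-th standard basis vector of `ℝ³`. -/
noncomputable def e3 (j : Fin 3) : V3 := Pi.single j 1

/-- A (not necessarily symmetric) matrix is positive definite:
`⟨v, M v⟩ > 0` for all nonzero `v`. -/
def PosDef3 (M : Mat3) : Prop := ∀ v : V3, v ≠ 0 → 0 < v ⬝ᵥ M.mulVec v

/-- A spatial state `(F, θ, E, q, g)`. -/
abbrev St : Type := Mat3 × ℝ × V3 × V3 × V3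

/-!
Differentiating the internal energy `ε = ψ + θη + E·π` along the path and splitting the
derivative of the free energy by components, the Coleman–Noll relations turn `ρ ε̇` into
`⟨τ, Ḟ F⁻¹⟩ + ρ θ η̇ + ρ ⟨E, π̇⟩ + ρ ∂_q ψ[q̇]`. Comparing with the energy balance leaves
`ρ (θ η̇ + ∂_q ψ[q̇]) = ρ r − d`, i.e. `δ₀ = −∂_q ψ[q̇]`; since `q̇ = h`, the reduced
dissipation inequality then bounds `ρ θ δ₀` below by `⟨q, g⟩`.
-/

section Calculus

variable {𝕜 : Type*} [NontriviallyNormedField 𝕜]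
  {E F : Type*} [NormedAddCommGroup E] [NormedSpace 𝕜 E] [NormedAddCommGroup F] [NormedSpace 𝕜 F]
  {f : 𝕜 → E × F} {f' : E × F} {x : 𝕜}

theorem HasDerivAt.fst (hf : HasDerivAt f f' x) : HasDerivAt (fun y => (f y).1) f'.1 x :=
  (ContinuousLinearMap.fst 𝕜 E F).hasFDerivAt.comp_hasDerivAt x hf

theorem HasDerivAt.snd (hf : HasDerivAt f f' x) : HasDerivAt (fun y => (f y).2) f'.2 x :=
  (ContinuousLinearMap.snd 𝕜 E F).hasFDerivAt.comp_hasDerivAt x hf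

theorem HasDerivAt.dotProduct {ι : Type*} [Fintype ι] {u w : 𝕜 → ι → 𝕜} {u' w' : ι → 𝕜}
    (hu : HasDerivAt u u' x) (hw : HasDerivAt w w' x) :
    HasDerivAt (fun y => u y ⬝ᵥ w y) (u' ⬝ᵥ w x + u x ⬝ᵥ w') x := by
  have hsum := HasDerivAt.fun_sum (u := Finset.univ) fun i _ =>
    (hasDerivAt_pi.mp hu i).mul (hasDerivAt_pi.mp hw i)
  rwa [Finset.sum_add_distrib] at hsum

end Calculus

theorem map_eq_add_components {E₁ E₂ E₃ E₄ E₅ G Fn : Type*}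
    [AddCommMonoid E₁] [AddCommMonoid E₂] [AddCommMonoid E₃] [AddCommMonoid E₄]
    [AddCommMonoid E₅] [AddCommMonoid G] [FunLike Fn (E₁ × E₂ × E₃ × E₄ × E₅) G]
    [AddMonoidHomClass Fn (E₁ × E₂ × E₃ × E₄ × E₅) G] (L : Fn) (v : E₁ × E₂ × E₃ × E₄ × E₅) :
    L v = L (v.1, 0, 0, 0, 0) + L (0, v.2.1, 0, 0, 0) + L (0, 0, v.2.2.1, 0, 0)
      + L (0, 0, 0, v.2.2.2.1, 0) + L (0, 0, 0, 0, v.2.2.2.2) := by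
  simp only [← map_add]
  congr 1
  ext <;> simp

theorem gibbs_relation {L : St →L[ℝ] ℝ} {F τₛ : Mat3} {ρ ηₛ : ℝ} {πₛ : V3}
    (hF : ∀ H : Mat3, frob τₛ (H * F⁻¹) = ρ * L (H, 0, 0, 0, 0))
    (hθ : ηₛ = - L (0, 1, 0, 0, 0))
    (hE : ∀ w : V3, πₛ ⬝ᵥ w = - L (0, 0, w, 0, 0))
    (hg : ∀ w : V3, L (0, 0, 0, 0, w) = 0) (v : St) :
    ρ * L v = frob τₛ (v.1 * F⁻¹) - ρ * (v.2.1 * ηₛ) - ρ * (πₛ ⬝ᵥ v.2.2.1)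
      + ρ * L (0, 0, 0, v.2.2.2.1, 0) := by
  have hθv : L (0, v.2.1, 0, 0, 0) = v.2.1 * L (0, 1, 0, 0, 0) := by
    rw [← smul_eq_mul, ← L.map_smul]
    simp
  rw [map_eq_add_components L v, hθv, hF, hθ, hE, hg]
  ring

theorem hasDerivAt_internal_energy {ψ η : St → ℝ} {π : St → V3} {s : ℝ → St} {v : St} {t : ℝ}
    (hs : HasDerivAt s v t) (hψ : DifferentiableAt ℝ ψ (s t))
    (hη : DifferentiableAt ℝ η (s t)) (hπ : DifferentiableAt ℝ π (s t)) :
    HasDerivAt (fun u => ψ (s u) + (s u).2.1 * η (s u) + (s u).2.2.1 ⬝ᵥ π (s u))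
      (fderiv ℝ ψ (s t) v + (v.2.1 * η (s t) + (s t).2.1 * fderiv ℝ η (s t) v)
        + (v.2.2.1 ⬝ᵥ π (s t) + (s t).2.2.1 ⬝ᵥ fderiv ℝ π (s t) v)) t :=
  ((hψ.hasFDerivAt.comp_hasDerivAt t hs).add
    (hs.snd.fst.mul (hη.hasFDerivAt.comp_hasDerivAt t hs))).add
    (hs.snd.snd.fst.dotProduct (hπ.hasFDerivAt.comp_hasDerivAt t hs))

theorem internal_dissipation_second_sound_general
    (ρR : ℝ) (hρR : 0 < ρR)
    (D : Set St) (hD : IsOpen D)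
    (hadm : ∀ (F : Mat3) (θ : ℝ) (E q g : V3),
      ((F, θ, E, q, g) : St) ∈ D → 0 < F.det ∧ 0 < θ)
    (ψ η : St → ℝ) (τ : St → Mat3) (π h : St → V3)
    (hψ : ContDiffOn ℝ 1 ψ D) (hη : ContDiffOn ℝ 1 η D)
    (hπ : ContDiffOn ℝ 1 π D)
    -- the constitutive restrictions of the spatial Coleman–Noll theorem:
    (hψg : ∀ s ∈ D, ∀ v : V3, fderiv ℝ ψ s (0, 0, 0, 0, v) = 0)
    (hηψ : ∀ s ∈ D, η s = - fderiv ℝ ψ s (0, 1, 0, 0, 0))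
    (hπψ : ∀ s ∈ D, ∀ v : V3, π s ⬝ᵥ v = - fderiv ℝ ψ s (0, 0, v, 0, 0))
    (hτψ : ∀ (F : Mat3) (θ : ℝ) (E q g : V3), ((F, θ, E, q, g) : St) ∈ D →
      ∀ H : Mat3,
        frob (τ (F, θ, E, q, g)) (H * F⁻¹)
          = (ρR / F.det) * fderiv ℝ ψ (F, θ, E, q, g) (H, 0, 0, 0, 0))
    (hred : ∀ (F : Mat3) (θ : ℝ) (E q g : V3), ((F, θ, E, q, g) : St) ∈ D →
      (ρR / F.det) * θ *
          fderiv ℝ ψ (F, θ, E, q, g) (0, 0, 0, h (F, θ, E, q, g), 0)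
        + q ⬝ᵥ g ≤ 0)
    -- a differentiable path of states governed by the heat-flux evolution equation:
    (s : ℝ → St) (hs : Differentiable ℝ s) (hsD : ∀ t, s t ∈ D)
    (hq : ∀ t, deriv (fun u => (s u).2.2.2.1) t = h (s t))
    -- radiant heating and divergence of the heat flux, satisfying the energy balance:
    (r d : ℝ → ℝ)
    (henergy : ∀ t,
      (ρR / ((s t).1).det) *
          deriv (fun u => ψ (s u) + (s u).2.1 * η (s u) + (s u).2.2.1 ⬝ᵥ π (s u)) t
        = frob (τ (s t)) (deriv (fun u => (s u).1) t * ((s t).1)⁻¹)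
          - d t
          + (ρR / ((s t).1).det) * ((s t).2.2.1 ⬝ᵥ deriv (fun u => π (s u)) t)
          + (ρR / ((s t).1).det) * r t) :
    ∀ t : ℝ,
      ((s t).2.1 * deriv (fun u => η (s u)) t - r t + d t / (ρR / ((s t).1).det)
          = - fderiv ℝ ψ (s t) (0, 0, 0, deriv (fun u => (s u).2.2.2.1) t, 0))
      ∧ (ρR / ((s t).1).det) * (s t).2.1 *
            ((s t).2.1 * deriv (fun u => η (s u)) t - r t + d t / (ρR / ((s t).1).det))
          ≥ (s t).2.2.2.1 ⬝ᵥ (s t).2.2.2.2 := by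
  intro t
  set p := s t
  set v := deriv s t
  set ρ := ρR / p.1.det
  have hsv : HasDerivAt s v t := (hs t).hasDerivAt
  have hp : p ∈ D := hsD t
  have hρ : ρ ≠ 0 := (div_pos hρR (hadm p.1 p.2.1 p.2.2.1 p.2.2.2.1 p.2.2.2.2 hp).1).ne'
  have hψ' := (hψ.differentiableOn one_ne_zero).differentiableAt (hD.mem_nhds hp)
  have hη' := (hη.differentiableOn one_ne_zero).differentiableAt (hD.mem_nhds hp)
  have hπ' := (hπ.differentiableOn one_ne_zero).differentiableAt (hD.mem_nhds hp)
  have hηs : HasDerivAt (fun u => η (s u)) (fderiv ℝ η p v) t :=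
    hη'.hasFDerivAt.comp_hasDerivAt t hsv
  have hπs : HasDerivAt (fun u => π (s u)) (fderiv ℝ π p v) t :=
    hπ'.hasFDerivAt.comp_hasDerivAt t hsv
  have balance := henergy t
  rw [(hasDerivAt_internal_energy hsv hψ' hη' hπ').deriv, hsv.fst.deriv, hπs.deriv] at balance
  have gibbs := gibbs_relation (hτψ p.1 p.2.1 p.2.2.1 p.2.2.2.1 p.2.2.2.2 hp)
    (hηψ p hp) (hπψ p hp) (hψg p hp) v
  simp only [Prod.mk.eta] at gibbs
  have dissipation : p.2.1 * deriv (fun u => η (s u)) t - r t + d t / ρ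
      = - fderiv ℝ ψ p (0, 0, 0, deriv (fun u => (s u).2.2.2.1) t, 0) := by
    rw [hηs.deriv, hsv.snd.snd.snd.fst.deriv, ← mul_right_inj' hρ, mul_add, mul_div_cancel₀ _ hρ]
    linear_combination balance - gibbs - ρ * dotProduct_comm v.2.2.1 (π p)
  refine ⟨dissipation, ?_⟩
  rw [dissipation, hq t]
  linarith [hred p.1 p.2.1 p.2.2.1 p.2.2.2.1 p.2.2.2.2 hp]

/-- **Internal dissipation theorem, second-sound theory (Theorem 4.1).** -/
theorem internal_dissipation_second_sound
    (ρR : ℝ) (hρR : 0 < ρR)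
    (D : Set St) (hD : IsOpen D)
    (hadm : ∀ (F : Mat3) (θ : ℝ) (E q g : V3),
      ((F, θ, E, q, g) : St) ∈ D → 0 < F.det ∧ 0 < θ)
    (ψ η : St → ℝ) (τ : St → Mat3) (π h : St → V3)
    (hψ : ContDiffOn ℝ 1 ψ D) (hη : ContDiffOn ℝ 1 η D)
    (hτ : ContDiffOn ℝ 1 τ D) (hπ : ContDiffOn ℝ 1 π D)
    (hh : ContDiffOn ℝ 1 h D)
    -- the constitutive restrictions of the spatial Coleman–Noll theorem:
    (hψg : ∀ s ∈ D, ∀ v : V3, fderiv ℝ ψ s (0, 0, 0, 0, v) = 0)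
    (hηψ : ∀ s ∈ D, η s = - fderiv ℝ ψ s (0, 1, 0, 0, 0))
    (hπψ : ∀ s ∈ D, ∀ v : V3, π s ⬝ᵥ v = - fderiv ℝ ψ s (0, 0, v, 0, 0))
    (hτψ : ∀ (F : Mat3) (θ : ℝ) (E q g : V3), ((F, θ, E, q, g) : St) ∈ D →
      ∀ H : Mat3,
        frob (τ (F, θ, E, q, g)) (H * F⁻¹)
          = (ρR / F.det) * fderiv ℝ ψ (F, θ, E, q, g) (H, 0, 0, 0, 0))
    (hred : ∀ (F : Mat3) (θ : ℝ) (E q g : V3), ((F, θ, E, q, g) : St) ∈ D →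
      (ρR / F.det) * θ *
          fderiv ℝ ψ (F, θ, E, q, g) (0, 0, 0, h (F, θ, E, q, g), 0)
        + q ⬝ᵥ g ≤ 0)
    -- a differentiable path of states governed by the heat-flux evolution equation:
    (s : ℝ → St) (hs : Differentiable ℝ s) (hsD : ∀ t, s t ∈ D)
    (hq : ∀ t, deriv (fun u => (s u).2.2.2.1) t = h (s t))
    -- radiant heating and divergence of the heat flux, satisfying the energy balance:
    (r d : ℝ → ℝ)
    (henergy : ∀ t,
      (ρR / ((s t).1).det) *
          deriv (fun u => ψ (s u) + (s u).2.1 * η (s u) + (s u).2.2.1 ⬝ᵥ π (s u)) t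
        = frob (τ (s t)) (deriv (fun u => (s u).1) t * ((s t).1)⁻¹)
          - d t
          + (ρR / ((s t).1).det) * ((s t).2.2.1 ⬝ᵥ deriv (fun u => π (s u)) t)
          + (ρR / ((s t).1).det) * r t) :
    ∀ t : ℝ,
      ((s t).2.1 * deriv (fun u => η (s u)) t - r t + d t / (ρR / ((s t).1).det)
          = - fderiv ℝ ψ (s t) (0, 0, 0, deriv (fun u => (s u).2.2.2.1) t, 0))
      ∧ (ρR / ((s t).1).det) * (s t).2.1 *
            ((s t).2.1 * deriv (fun u => η (s u)) t - r t + d t / (ρR / ((s t).1).det))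
          ≥ (s t).2.2.2.1 ⬝ᵥ (s t).2.2.2.2 :=
  internal_dissipation_second_sound_general ρR hρR D hD hadm ψ η τ π h hψ hη hπ hψg hηψ hπψ hτψ hred
    s hs hsD hq r d henergy
end

section
/- Internal energy formula in the Cattaneo theory: In the setting of the Cattaneo theorem, assume K̂ is positive definite, Ẑ := K̂⁻¹T̂ is symmetric, ρ_R ψ̂(F, θ, W, Q) = ρ_R ψ̂₀(F, θ, W) + (1/(2θ)) ⟨Q, Ẑ(F, θ, W) Q⟩ with ψ̂₀(F, θ, W) = ψ̂(F, θ, W, 0), and set η̂ := −∂_θ ψ̂. Then the internal (thermal) energy combination ε̂ := ψ̂ + θ η̂ satisfies ρ_R ε̂(F, θ, W, Q) = ρ_R ε̂₀(F, θ, W) + ⟨Q, Â(F, θ, W) Q⟩, where ε̂₀ := ψ̂₀ − θ ∂_θ ψ̂₀ and Â := −(θ²/2) ∂_θ ( Ẑ / θ² ). -/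
open Matrix

/-- A triple `(F, θ, W)` of deformation gradient, temperature and referential electric field. -/
abbrev Tri : Type := Mat3 × ℝ × V3

/-- A referential state `(F, θ, W, Q)`. -/
abbrev StC : Type := Mat3 × ℝ × V3 × V3

/-- The partial derivative of `ψ̂` with respect to the temperature `θ`. -/
noncomputable def gradθ (ψ : StC → ℝ) (p : StC) : ℝ :=
  fderiv ℝ ψ p (0, 1, 0, 0)

/-! Along the temperature line, `ρR ψ̂(·, Q) = ρR ψ̂₀ + q / (2θ)` with `q(θ) = ⟨Q, Ẑ Q⟩`, and the
operation `φ ↦ φ - θ ∂_θ φ` taking free to internal energy sends `q / (2θ)` to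
`-(θ²/2) ∂_θ (q / θ²)`. The only analytic input is the differentiability of `θ ↦ Ẑ`,
which follows entrywise from the adjugate formula for `K̂⁻¹`. -/

open Filter Topology

section MatrixCalculus

variable {𝕜 E : Type*} [NontriviallyNormedField 𝕜] [NormedAddCommGroup E] [NormedSpace 𝕜 E]
  {x : E}

theorem differentiableAt_matrix_mul_apply {l m n : Type*} [Fintype m]
    {M : E → Matrix l m 𝕜} {N : E → Matrix m n 𝕜}
    (hM : ∀ i j, DifferentiableAt 𝕜 (fun y => M y i j) x)
    (hN : ∀ i j, DifferentiableAt 𝕜 (fun y => N y i j) x) (i : l) (j : n) :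
    DifferentiableAt 𝕜 (fun y => (M y * N y) i j) x := by
  simp only [mul_apply]
  exact DifferentiableAt.fun_sum fun k _ => (hM i k).mul (hN k j)

variable {n : Type*} [Fintype n] [DecidableEq n] {M : E → Matrix n n 𝕜}

theorem differentiableAt_matrix_det (hM : ∀ i j, DifferentiableAt 𝕜 (fun y => M y i j) x) :
    DifferentiableAt 𝕜 (fun y => (M y).det) x := by
  simp only [det_apply]
  exact DifferentiableAt.fun_sum fun σ _ =>
    (HasFDerivAt.finsetProd fun i _ => (hM (σ i) i).hasFDerivAt).differentiableAt.const_smul _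

theorem differentiableAt_matrix_adjugate_apply
    (hM : ∀ i j, DifferentiableAt 𝕜 (fun y => M y i j) x) (i j : n) :
    DifferentiableAt 𝕜 (fun y => (M y).adjugate i j) x := by
  simp only [adjugate_apply]
  refine differentiableAt_matrix_det fun k l => ?_
  simp only [updateRow_apply]
  split_ifs
  · exact differentiableAt_const _
  · exact hM k l

theorem differentiableAt_matrix_inv_apply
    (hM : ∀ i j, DifferentiableAt 𝕜 (fun y => M y i j) x) (hdet : (M x).det ≠ 0) (i j : n) :
    DifferentiableAt 𝕜 (fun y => (M y)⁻¹ i j) x := by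
  simp only [inv_def, Ring.inverse_eq_inv', Matrix.smul_apply, smul_eq_mul]
  exact ((differentiableAt_matrix_det hM).inv hdet).mul
    (differentiableAt_matrix_adjugate_apply hM i j)

end MatrixCalculus

theorem hasDerivAt_dotProduct_mulVec {m n : Type*} [Fintype m] [Fintype n]
    {M : ℝ → Matrix m n ℝ} {M' : Matrix m n ℝ} {x : ℝ}
    (hM : ∀ i j, HasDerivAt (fun t => M t i j) (M' i j) x) (v : m → ℝ) (w : n → ℝ) :
    HasDerivAt (fun t => v ⬝ᵥ M t *ᵥ w) (v ⬝ᵥ M' *ᵥ w) x := by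
  simp only [dotProduct, mulVec, Finset.mul_sum]
  exact HasDerivAt.fun_sum fun i _ => HasDerivAt.fun_sum fun j _ =>
    ((hM i j).mul_const (w j)).const_mul (v i)

theorem dotProduct_mulVec_deriv_div_sq {n : Type*} [Fintype n] {Z : ℝ → Matrix n n ℝ} {θ : ℝ}
    (hZ : ∀ i j, DifferentiableAt ℝ (fun t => Z t i j) θ) (hθ : θ ≠ 0) (v : n → ℝ) (c : ℝ) :
    v ⬝ᵥ (of fun i j => c * deriv (fun t => Z t i j / t ^ 2) θ) *ᵥ v
      = c * deriv (fun t => (v ⬝ᵥ Z t *ᵥ v) / t ^ 2) θ := by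
  have hder : HasDerivAt (fun t => v ⬝ᵥ (of fun i j => Z t i j / t ^ 2) *ᵥ v)
      (v ⬝ᵥ (of fun i j => deriv (fun t => Z t i j / t ^ 2) θ) *ᵥ v) θ :=
    hasDerivAt_dotProduct_mulVec
      (fun i j => ((hZ i j).fun_div (differentiableAt_pow 2) (pow_ne_zero 2 hθ)).hasDerivAt) v v
  have hscaled : ∀ t, (of fun i j => Z t i j / t ^ 2) = (t ^ 2)⁻¹ • Z t := fun t => by
    ext i j; simp [div_eq_inv_mul]
  simp only [hscaled, smul_mulVec, dotProduct_smul, smul_eq_mul, inv_mul_eq_div] at hder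
  have hc : (of fun i j => c * deriv (fun t => Z t i j / t ^ 2) θ)
      = c • of fun i j => deriv (fun t => Z t i j / t ^ 2) θ := rfl
  rw [hder.deriv, hc, smul_mulVec, dotProduct_smul, smul_eq_mul]

theorem sub_mul_deriv_of_eventuallyEq_add_div {f f₀ q : ℝ → ℝ} {f' f₀' θ : ℝ} (hθ : θ ≠ 0)
    (hf : HasDerivAt f f' θ) (hf₀ : HasDerivAt f₀ f₀' θ) (hq : DifferentiableAt ℝ q θ)
    (heq : f =ᶠ[𝓝 θ] fun t => f₀ t + q t / (2 * t)) :
    f θ - θ * f' = f₀ θ - θ * f₀' - θ ^ 2 / 2 * deriv (fun t => q t / t ^ 2) θ := by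
  have h2θ : HasDerivAt (fun t : ℝ => 2 * t) 2 θ := by simpa using (hasDerivAt_id θ).const_mul 2
  have hrhs := hf₀.add (hq.hasDerivAt.fun_div h2θ (mul_ne_zero two_ne_zero hθ))
  have hf' := hf.unique (hrhs.congr_of_eventuallyEq heq)
  have hd := (hq.hasDerivAt.fun_div (hasDerivAt_pow 2 θ) (pow_ne_zero 2 hθ)).deriv
  rw [hf', heq.eq_of_nhds, hd]
  field_simp
  ring

theorem hasDerivAt_gradθ {ψ : StC → ℝ} {F : Mat3} {θ : ℝ} {W Q : V3}
    (hψ : DifferentiableAt ℝ ψ (F, θ, W, Q)) :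
    HasDerivAt (fun t => ψ (F, t, W, Q)) (gradθ ψ (F, θ, W, Q)) θ :=
  hψ.hasFDerivAt.comp_hasDerivAt θ
    ((hasDerivAt_const θ F).prodMk ((hasDerivAt_id θ).prodMk (hasDerivAt_const θ (W, Q))))

theorem differentiableAt_temperature_slice_apply {G : Tri → Mat3} {D : Set Tri}
    (hD : IsOpen D) (hG : ContDiffOn ℝ 1 G D) {F : Mat3} {θ : ℝ} {W : V3}
    (hp : ((F, θ, W) : Tri) ∈ D) (i j : Fin 3) :
    DifferentiableAt ℝ (fun t => G (F, t, W) i j) θ := by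
  have hcurve : DifferentiableAt ℝ (fun t => G (F, t, W)) θ :=
    ((hG.contDiffAt (hD.mem_nhds hp)).differentiableAt one_ne_zero).comp θ (by fun_prop)
  exact differentiableAt_pi.mp (differentiableAt_pi.mp hcurve i) j

theorem internal_energy_cattaneo_general
    (ρR : ℝ)
    (D0 : Set Tri) (hD0 : IsOpen D0)
    (hadm : ∀ (F : Mat3) (θ : ℝ) (W : V3), ((F, θ, W) : Tri) ∈ D0 → 0 < F.det ∧ 0 < θ)
    (That Khat : Tri → Mat3)
    (hT : ContDiffOn ℝ 1 That D0) (hK : ContDiffOn ℝ 1 Khat D0)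
    (hKu : ∀ p ∈ D0, IsUnit (Khat p))
    (ψ : StC → ℝ)
    (hψ : ContDiffOn ℝ 2 ψ {p : StC | ((p.1, p.2.1, p.2.2.1) : Tri) ∈ D0})
    (hψform : ∀ (F : Mat3) (θ : ℝ) (W : V3), ((F, θ, W) : Tri) ∈ D0 → ∀ Q : V3,
      ρR * ψ (F, θ, W, Q)
        = ρR * ψ (F, θ, W, 0)
          + (1 / (2 * θ)) *
              (Q ⬝ᵥ ((Khat (F, θ, W))⁻¹ * That (F, θ, W)).mulVec Q)) :
    -- conclusion: with η̂ := −∂_θ ψ̂ and ε̂ := ψ̂ + θ η̂,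
    -- ρ_R ε̂ = ρ_R ε̂₀ + ⟨Q, Â Q⟩ with ε̂₀ = ψ̂₀ − θ ∂_θ ψ̂₀ and Â = −(θ²/2) ∂_θ (Ẑ/θ²)
    ∀ (F : Mat3) (θ : ℝ) (W : V3), ((F, θ, W) : Tri) ∈ D0 → ∀ Q : V3,
      ρR * (ψ (F, θ, W, Q) + θ * (- gradθ ψ (F, θ, W, Q)))
        = ρR * (ψ (F, θ, W, 0) - θ * gradθ ψ (F, θ, W, 0))
          + Q ⬝ᵥ (Matrix.of fun i j =>
              -(θ ^ 2 / 2) * deriv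
                (fun t : ℝ =>
                  ((Khat (F, t, W))⁻¹ * That (F, t, W)) i j / t ^ 2) θ).mulVec Q := by
  intro F θ W hp Q
  have hθ : θ ≠ 0 := (hadm F θ W hp).2.ne'
  have hZ : ∀ i j, DifferentiableAt ℝ (fun t => ((Khat (F, t, W))⁻¹ * That (F, t, W)) i j) θ :=
    differentiableAt_matrix_mul_apply
      (differentiableAt_matrix_inv_apply (differentiableAt_temperature_slice_apply hD0 hK hp)
        ((isUnit_iff_isUnit_det _).mp (hKu _ hp)).ne_zero)
      (differentiableAt_temperature_slice_apply hD0 hT hp)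
  have hq : DifferentiableAt ℝ (fun t => Q ⬝ᵥ ((Khat (F, t, W))⁻¹ * That (F, t, W)) *ᵥ Q) θ :=
    (hasDerivAt_dotProduct_mulVec (fun i j => (hZ i j).hasDerivAt) Q Q).differentiableAt
  have hU : IsOpen {p : StC | ((p.1, p.2.1, p.2.2.1) : Tri) ∈ D0} := hD0.preimage (by fun_prop)
  have hψslice : ∀ Q', HasDerivAt (fun t => ψ (F, t, W, Q')) (gradθ ψ (F, θ, W, Q')) θ :=
    fun Q' => hasDerivAt_gradθ <|
      (hψ.contDiffAt (hU.mem_nhds (show ((F, θ, W, Q') : StC) ∈ _ from hp))).differentiableAt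
        two_ne_zero
  have hform : (fun t => ρR * ψ (F, t, W, Q)) =ᶠ[𝓝 θ] fun t =>
      ρR * ψ (F, t, W, 0) + (Q ⬝ᵥ ((Khat (F, t, W))⁻¹ * That (F, t, W)) *ᵥ Q) / (2 * t) := by
    have hcurve : Continuous fun t : ℝ => ((F, t, W) : Tri) := by fun_prop
    filter_upwards [hcurve.continuousAt.preimage_mem_nhds (hD0.mem_nhds hp)] with t ht
    rw [hψform F t W ht Q, one_div_mul_eq_div]
  rw [dotProduct_mulVec_deriv_div_sq hZ hθ]
  linear_combination sub_mul_deriv_of_eventuallyEq_add_div hθ ((hψslice Q).const_mul ρR)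
    ((hψslice 0).const_mul ρR) hq hform

/-- **Internal energy formula in the Cattaneo theory.** -/
theorem internal_energy_cattaneo
    (ρR : ℝ) (hρR : 0 < ρR)
    (D0 : Set Tri) (hD0 : IsOpen D0)
    (hadm : ∀ (F : Mat3) (θ : ℝ) (W : V3), ((F, θ, W) : Tri) ∈ D0 → 0 < F.det ∧ 0 < θ)
    (That Khat : Tri → Mat3)
    (hT : ContDiffOn ℝ 1 That D0) (hK : ContDiffOn ℝ 1 Khat D0)
    (hTu : ∀ p ∈ D0, IsUnit (That p)) (hKu : ∀ p ∈ D0, IsUnit (Khat p))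
    (ψ : StC → ℝ)
    (hψ : ContDiffOn ℝ 2 ψ {p : StC | ((p.1, p.2.1, p.2.2.1) : Tri) ∈ D0})
    -- the hypotheses of the Cattaneo theorem's characterization:
    (hKpos : ∀ p ∈ D0, PosDef3 (Khat p))
    (hZsym : ∀ p ∈ D0, ((Khat p)⁻¹ * That p)ᵀ = (Khat p)⁻¹ * That p)
    (hψform : ∀ (F : Mat3) (θ : ℝ) (W : V3), ((F, θ, W) : Tri) ∈ D0 → ∀ Q : V3,
      ρR * ψ (F, θ, W, Q)
        = ρR * ψ (F, θ, W, 0)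
          + (1 / (2 * θ)) *
              (Q ⬝ᵥ ((Khat (F, θ, W))⁻¹ * That (F, θ, W)).mulVec Q)) :
    -- conclusion: with η̂ := −∂_θ ψ̂ and ε̂ := ψ̂ + θ η̂,
    -- ρ_R ε̂ = ρ_R ε̂₀ + ⟨Q, Â Q⟩ with ε̂₀ = ψ̂₀ − θ ∂_θ ψ̂₀ and Â = −(θ²/2) ∂_θ (Ẑ/θ²)
    ∀ (F : Mat3) (θ : ℝ) (W : V3), ((F, θ, W) : Tri) ∈ D0 → ∀ Q : V3,
      ρR * (ψ (F, θ, W, Q) + θ * (- gradθ ψ (F, θ, W, Q)))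
        = ρR * (ψ (F, θ, W, 0) - θ * gradθ ψ (F, θ, W, 0))
          + Q ⬝ᵥ (Matrix.of fun i j =>
              -(θ ^ 2 / 2) * deriv
                (fun t : ℝ =>
                  ((Khat (F, t, W))⁻¹ * That (F, t, W)) i j / t ^ 2) θ).mulVec Q :=
  internal_energy_cattaneo_general ρR D0 hD0 hadm That Khat hT hK hKu ψ hψ hψform
end

section
/- Vanishing of the static heat flux (Theorem 7.2): Let D be an open set of tuples (F, θ, E, g) (F a 3×3 real matrix with det F > 0, θ > 0, E, g ∈ ℝ³) such that (F, θ, E, g) ∈ D implies (F, θ, E, 0) ∈ D, and let q̄ : D → ℝ³ be continuous and satisfy the Fourier inequality ⟨q̄(F, θ, E, g), g⟩ ≤ 0 for all (F, θ, E, g) ∈ D. Then the static heat flux vanishes: q̄(F, θ, E, 0) = 0 for every (F, θ, E, 0) ∈ D. -/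
open Matrix

/-- A state `(F, θ, E, g)` of the usual theory. -/
abbrev St4 : Type := Mat3 × ℝ × V3 × V3

open Topology Filter

theorem eq_zero_of_dotProduct_self_nonpos {ι : Type*} [Fintype ι] {w : ι → ℝ}
    (h : w ⬝ᵥ w ≤ 0) : w = 0 :=
  dotProduct_self_eq_zero.mp (le_antisymm h (by simpa using dotProduct_star_self_nonneg w))

theorem eq_zero_of_eventually_dotProduct_nonpos {ι : Type*} [Fintype ι]
    {f : (ι → ℝ) → ι → ℝ} (hf : ContinuousAt f 0) (h : ∀ᶠ g in 𝓝 0, f g ⬝ᵥ g ≤ 0) :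
    f 0 = 0 := by
  set w := f 0
  -- Test the inequality at `g = t • f 0`, divide by `t > 0` and let `t ↓ 0` to get `f 0 ⬝ᵥ f 0 ≤ 0`.
  have hray : Tendsto (fun t : ℝ => t • w) (𝓝[>] 0) (𝓝 0) :=
    ((continuous_id.smul continuous_const).tendsto' 0 0 (zero_smul ℝ w)).mono_left
      nhdsWithin_le_nhds
  have hlim : Tendsto (fun t : ℝ => f (t • w) ⬝ᵥ w) (𝓝[>] 0) (𝓝 (w ⬝ᵥ w)) :=
    ((continuous_id.dotProduct continuous_const).tendsto w).comp (hf.tendsto.comp hray)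
  refine eq_zero_of_dotProduct_self_nonpos (le_of_tendsto hlim ?_)
  filter_upwards [hray.eventually h, self_mem_nhdsWithin] with t ht (htpos : 0 < t)
  rw [dotProduct_smul, smul_eq_mul] at ht
  exact nonpos_of_mul_nonpos_right ht htpos

theorem static_heat_flux_vanishes_general
    (D : Set St4) (hD : IsOpen D)
    (qb : St4 → V3) (hq : ContinuousOn qb D)
    (hFourier : ∀ (F : Mat3) (θ : ℝ) (E g : V3), ((F, θ, E, g) : St4) ∈ D →
      qb (F, θ, E, g) ⬝ᵥ g ≤ 0) :
    ∀ (F : Mat3) (θ : ℝ) (E : V3), ((F, θ, E, (0 : V3)) : St4) ∈ D →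
      qb (F, θ, E, 0) = 0 := by
  intro F θ E hmem
  set state : V3 → St4 := fun g => (F, θ, E, g)
  have hstate : ContinuousAt state 0 := by fun_prop
  have hnear : ∀ᶠ g in 𝓝 0, state g ∈ D := hstate.preimage_mem_nhds (hD.mem_nhds hmem)
  exact eq_zero_of_eventually_dotProduct_nonpos (f := qb ∘ state)
    ((hq.continuousAt (hD.mem_nhds hmem)).comp (f := state) hstate)
    (hnear.mono fun g hg => hFourier F θ E g hg)

/-- **Vanishing of the static heat flux (Theorem 7.2).** -/
theorem static_heat_flux_vanishes
    (D : Set St4) (hD : IsOpen D)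
    (hadm : ∀ (F : Mat3) (θ : ℝ) (E g : V3),
      ((F, θ, E, g) : St4) ∈ D → 0 < F.det ∧ 0 < θ)
    (hD0 : ∀ (F : Mat3) (θ : ℝ) (E g : V3),
      ((F, θ, E, g) : St4) ∈ D → ((F, θ, E, (0 : V3)) : St4) ∈ D)
    (qb : St4 → V3) (hq : ContinuousOn qb D)
    (hFourier : ∀ (F : Mat3) (θ : ℝ) (E g : V3), ((F, θ, E, g) : St4) ∈ D →
      qb (F, θ, E, g) ⬝ᵥ g ≤ 0) :
    ∀ (F : Mat3) (θ : ℝ) (E : V3), ((F, θ, E, (0 : V3)) : St4) ∈ D →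
      qb (F, θ, E, 0) = 0 :=
  static_heat_flux_vanishes_general D hD qb hq hFourier
end

section
/- Vanishing internal dissipation in the usual theory (Theorem 7.4): Assume the constitutive restrictions of the usual theory hold: ψ̄(F, θ, E) is C¹ (independent of g), η̄ = −∂_θ ψ̄, π̄ = −∂_E ψ̄, and ⟨τ̄, H F⁻¹⟩_Frob = ρ⟨∂_F ψ̄, H⟩_Frob for all 3×3 matrices H. Let t ↦ (F(t), θ(t), E(t)) be a differentiable path into the constitutive domain, and let r(t) and d(t) be functions satisfying the energy balance ρ(t) ε̇(t) = ⟨τ(t), Ḟ(t) F(t)⁻¹⟩_Frob − d(t) + ρ(t)⟨E(t), π̇(t)⟩ + ρ(t) r(t), where ψ(t), η(t), τ(t), π(t) are the constitutive functions evaluated along the path, ε(t) = ψ(t) + θ(t)η(t) + ⟨E(t), π(t)⟩ and ρ(t) = ρ_R/det F(t). Then the internal dissipation vanishes identically: δ₀(t) := θ(t) η̇(t) − r(t) + d(t)/ρ(t) = 0 for all t. -/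
/-!
Along the path, `η = -∂_θ ψ` and `π = -∂_E ψ` make the `θ̇`- and `Ė`-parts of `ψ̇` cancel
against `θ̇ η` and `⟪Ė, π⟫` in `ε̇`, so `ρ ε̇ = ρ ∂_F ψ[Ḟ] + ρ θ η̇ + ρ ⟪E, π̇⟫`. The stress
relation turns `ρ ∂_F ψ[Ḟ]` into the stress power `⟨τ, Ḟ F⁻¹⟩`, and the energy balance
collapses to `ρ θ η̇ = ρ r - d`.
-/

open Matrix

/-- A state `(F, θ, E)` of the usual theory (the constitutive functions do not
depend on the temperature gradient). -/
abbrev St3 : Type := Mat3 × ℝ × V3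

section Calculus

variable {n : Type*} [Fintype n]

theorem HasDerivAt.dotProduct_s12 {f g : ℝ → n → ℝ} {f' g' : n → ℝ} {t : ℝ}
    (hf : HasDerivAt f f' t) (hg : HasDerivAt g g' t) :
    HasDerivAt (fun u => f u ⬝ᵥ g u) (f' ⬝ᵥ g t + f t ⬝ᵥ g') t := by
  have hsum := HasDerivAt.fun_sum (u := Finset.univ) (A := fun i u => f u i * g u i)
    fun i _ => (hasDerivAt_pi.mp hf i).mul (hasDerivAt_pi.mp hg i)
  rw [Finset.sum_add_distrib] at hsum
  exact hsum

variable {X : Type*} [NormedAddCommGroup X] [NormedSpace ℝ X]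

omit [Fintype n] in
theorem ContinuousLinearMap.apply_eq_add_add_prodMk {G : Type*} [NormedAddCommGroup G]
    [NormedSpace ℝ G] (L : X × ℝ × (n → ℝ) →L[ℝ] G) (v : X × ℝ × (n → ℝ)) :
    L v = L (v.1, 0, 0) + v.2.1 • L (0, 1, 0) + L (0, 0, v.2.2) := by
  rw [← L.map_smul, ← map_add, ← map_add]
  congr 1
  ext <;> simp

theorem hasDerivAt_internalEnergy {ψ η : X × ℝ × (n → ℝ) → ℝ}
    {π : X × ℝ × (n → ℝ) → n → ℝ} {s : ℝ → X × ℝ × (n → ℝ)} {s' : X × ℝ × (n → ℝ)}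
    {ψ' : X × ℝ × (n → ℝ) →L[ℝ] ℝ} {η' : ℝ} {π' : n → ℝ} {t : ℝ}
    (hs : HasDerivAt s s' t) (hψ : HasFDerivAt ψ ψ' (s t))
    (hη : HasDerivAt (fun u => η (s u)) η' t) (hπ : HasDerivAt (fun u => π (s u)) π' t)
    (hηψ : η (s t) = - ψ' (0, 1, 0)) (hπψ : ∀ v, π (s t) ⬝ᵥ v = - ψ' (0, 0, v)) :
    HasDerivAt (fun u => ψ (s u) + (s u).2.1 * η (s u) + (s u).2.2 ⬝ᵥ π (s u))
      (ψ' (s'.1, 0, 0) + (s t).2.1 * η' + (s t).2.2 ⬝ᵥ π') t := by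
  have hθ : HasDerivAt (fun u => (s u).2.1) s'.2.1 t := hs.snd.fst
  have hE : HasDerivAt (fun u => (s u).2.2) s'.2.2 t := hs.snd.snd
  refine (((hψ.comp_hasDerivAt t hs).add (hθ.mul hη)).add (hE.dotProduct_s12 hπ)).congr_deriv ?_
  rw [ψ'.apply_eq_add_add_prodMk s', hηψ, dotProduct_comm s'.2.2, hπψ, smul_eq_mul]
  ring

theorem ContDiffOn.differentiableAt_comp {E F : Type*} [NormedAddCommGroup E]
    [NormedSpace ℝ E] [NormedAddCommGroup F] [NormedSpace ℝ F] {f : E → F} {D : Set E}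
    {k : WithTop ℕ∞} (hf : ContDiffOn ℝ k f D) (hk : k ≠ 0) (hD : IsOpen D) {s : ℝ → E} {t : ℝ}
    (hs : DifferentiableAt ℝ s t) (hst : s t ∈ D) :
    DifferentiableAt ℝ (fun u => f (s u)) t :=
  ((hf.differentiableOn hk).differentiableAt (hD.mem_nhds hst)).comp t hs

end Calculus

theorem internal_dissipation_vanishes_usual_general
    (ρR : ℝ) (hρR : 0 < ρR)
    (D : Set St3) (hD : IsOpen D)
    (hadm : ∀ (F : Mat3) (θ : ℝ) (E : V3),
      ((F, θ, E) : St3) ∈ D → 0 < F.det ∧ 0 < θ)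
    (ψ η : St3 → ℝ) (τ : St3 → Mat3) (π : St3 → V3)
    (hψ : ContDiffOn ℝ 1 ψ D) (hη : ContDiffOn ℝ 1 η D)
    (hπ : ContDiffOn ℝ 1 π D)
    -- the constitutive restrictions of the usual theory:
    (hηψ : ∀ s ∈ D, η s = - fderiv ℝ ψ s (0, 1, 0))
    (hπψ : ∀ s ∈ D, ∀ v : V3, π s ⬝ᵥ v = - fderiv ℝ ψ s (0, 0, v))
    (hτψ : ∀ (F : Mat3) (θ : ℝ) (E : V3), ((F, θ, E) : St3) ∈ D →
      ∀ H : Mat3,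
        frob (τ (F, θ, E)) (H * F⁻¹)
          = (ρR / F.det) * fderiv ℝ ψ (F, θ, E) (H, 0, 0))
    -- a differentiable path of states:
    (s : ℝ → St3) (hs : Differentiable ℝ s) (hsD : ∀ t, s t ∈ D)
    -- radiant heating and divergence of the heat flux, satisfying the energy balance:
    (r d : ℝ → ℝ)
    (henergy : ∀ t,
      (ρR / ((s t).1).det) *
          deriv (fun u => ψ (s u) + (s u).2.1 * η (s u) + (s u).2.2 ⬝ᵥ π (s u)) t
        = frob (τ (s t)) (deriv (fun u => (s u).1) t * ((s t).1)⁻¹)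
          - d t
          + (ρR / ((s t).1).det) * ((s t).2.2 ⬝ᵥ deriv (fun u => π (s u)) t)
          + (ρR / ((s t).1).det) * r t) :
    -- conclusion: the internal dissipation vanishes identically
    ∀ t : ℝ,
      (s t).2.1 * deriv (fun u => η (s u)) t - r t + d t / (ρR / ((s t).1).det) = 0 := by
  intro t
  have hst := (hs t).hasDerivAt
  have hψt := ((hψ.differentiableOn one_ne_zero).differentiableAt
    (hD.mem_nhds (hsD t))).hasFDerivAt
  have hε := hasDerivAt_internalEnergy hst hψt
    ((hη.differentiableAt_comp one_ne_zero hD (hs t) (hsD t)).hasDerivAt)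
    ((hπ.differentiableAt_comp one_ne_zero hD (hs t) (hsD t)).hasDerivAt)
    (hηψ _ (hsD t)) (hπψ _ (hsD t))
  have hstress := hτψ (s t).1 (s t).2.1 (s t).2.2 (hsD t) (deriv s t).1
  simp only [Prod.mk.eta] at hstress
  have hF : HasDerivAt (fun u => (s u).1) (deriv s t).1 t := hst.fst
  have hbalance := henergy t
  rw [hε.deriv, hF.deriv, hstress] at hbalance
  have hρ : ρR / (s t).1.det ≠ 0 := (div_pos hρR (hadm _ _ _ (hsD t)).1).ne'
  set ρ := ρR / (s t).1.det
  field_simp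
  linear_combination hbalance

/-- **Vanishing internal dissipation in the usual theory (Theorem 7.4).** -/
theorem internal_dissipation_vanishes_usual
    (ρR : ℝ) (hρR : 0 < ρR)
    (D : Set St3) (hD : IsOpen D)
    (hadm : ∀ (F : Mat3) (θ : ℝ) (E : V3),
      ((F, θ, E) : St3) ∈ D → 0 < F.det ∧ 0 < θ)
    (ψ η : St3 → ℝ) (τ : St3 → Mat3) (π : St3 → V3)
    (hψ : ContDiffOn ℝ 1 ψ D) (hη : ContDiffOn ℝ 1 η D)
    (hτ : ContDiffOn ℝ 1 τ D) (hπ : ContDiffOn ℝ 1 π D)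
    -- the constitutive restrictions of the usual theory:
    (hηψ : ∀ s ∈ D, η s = - fderiv ℝ ψ s (0, 1, 0))
    (hπψ : ∀ s ∈ D, ∀ v : V3, π s ⬝ᵥ v = - fderiv ℝ ψ s (0, 0, v))
    (hτψ : ∀ (F : Mat3) (θ : ℝ) (E : V3), ((F, θ, E) : St3) ∈ D →
      ∀ H : Mat3,
        frob (τ (F, θ, E)) (H * F⁻¹)
          = (ρR / F.det) * fderiv ℝ ψ (F, θ, E) (H, 0, 0))
    -- a differentiable path of states:
    (s : ℝ → St3) (hs : Differentiable ℝ s) (hsD : ∀ t, s t ∈ D)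
    -- radiant heating and divergence of the heat flux, satisfying the energy balance:
    (r d : ℝ → ℝ)
    (henergy : ∀ t,
      (ρR / ((s t).1).det) *
          deriv (fun u => ψ (s u) + (s u).2.1 * η (s u) + (s u).2.2 ⬝ᵥ π (s u)) t
        = frob (τ (s t)) (deriv (fun u => (s u).1) t * ((s t).1)⁻¹)
          - d t
          + (ρR / ((s t).1).det) * ((s t).2.2 ⬝ᵥ deriv (fun u => π (s u)) t)
          + (ρR / ((s t).1).det) * r t) :
    -- conclusion: the internal dissipation vanishes identically
    ∀ t : ℝ,
      (s t).2.1 * deriv (fun u => η (s u)) t - r t + d t / (ρR / ((s t).1).det) = 0 :=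
  internal_dissipation_vanishes_usual_general ρR hρR D hD hadm ψ η τ π hψ hη hπ hηψ hπψ hτψ s hs hsD
    r d henergy
end

section
/- Piola divergence identity (equation (13) of the paper): Let Ω ⊆ ℝ³ be open and let x : Ω → ℝ³ be a twice continuously differentiable injective map with deformation gradient F(X) = Dx(X) satisfying J(X) := det F(X) > 0 for all X ∈ Ω, and let h : x(Ω) → ℝ³ be continuously differentiable. Define the referential field H(X) := J(X) · F(X)⁻¹ · h(x(X)). Then for every X ∈ Ω, Div H(X) = J(X) · (div h)(x(X)), where Div H(X) is the trace of the Jacobian of H at X and (div h)(y) is the trace of the Jacobian of h at y. -/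
open Matrix

/-- The 3×3 Jacobian matrix of a map `f : ℝ³ → ℝ³` at a point `X`. -/
noncomputable def jac3 (f : V3 → V3) (X : V3) : Mat3 :=
  Matrix.of fun i j => fderiv ℝ f X (e3 j) i

/-! On `Ω` the field `J F⁻¹ (h ∘ x)` coincides with `adj F (h ∘ x)`. By the product rule its
divergence is `(Div adj F) · (h ∘ x) + tr (adj F · Dh(x) · F)`. The first term vanishes by the
Piola identity `Div adj F = 0`: the `i`-th row of `adj F` is `∂_{i+1} x × ∂_{i+2} x`, and after
differentiating, the terms cancel in pairs by the symmetry of the second derivatives of `x`.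
The second term is `tr (F · adj F · Dh(x)) = J tr Dh(x)`. -/

open Filter Topology

lemma adjugate_fin_three_apply (A : Mat3) (i j : Fin 3) :
    A.adjugate i j =
      A (j + 1) (i + 1) * A (j + 2) (i + 2) - A (j + 1) (i + 2) * A (j + 2) (i + 1) := by
  fin_cases i <;> fin_cases j <;> simp [Matrix.adjugate_fin_three] <;> ring

lemma trace_adjugate_mul_mul {n R : Type*} [Fintype n] [DecidableEq n] [CommRing R]
    (A B : Matrix n n R) : (A.adjugate * (B * A)).trace = A.det * B.trace := by
  rw [Matrix.trace_mul_comm, Matrix.mul_assoc, Matrix.mul_adjugate, Matrix.mul_smul,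
    Matrix.mul_one, Matrix.trace_smul, smul_eq_mul]

lemma jac3_eq_toMatrix' (f : V3 → V3) (X : V3) :
    jac3 f X = LinearMap.toMatrix' (fderiv ℝ f X : V3 →ₗ[ℝ] V3) := by
  ext i j
  simp [jac3, e3, LinearMap.toMatrix'_apply]

lemma jac3_comp {f g : V3 → V3} {X : V3} (hg : DifferentiableAt ℝ g (f X))
    (hf : DifferentiableAt ℝ f X) :
    jac3 (fun X' => g (f X')) X = jac3 g (f X) * jac3 f X := by
  rw [jac3_eq_toMatrix', jac3_eq_toMatrix', jac3_eq_toMatrix', ← LinearMap.toMatrix'_comp,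
    fderiv_fun_comp X hg hf]
  rfl

lemma Filter.EventuallyEq.jac3_eq {f g : V3 → V3} {X : V3} (hfg : f =ᶠ[𝓝 X] g) :
    jac3 f X = jac3 g X := by
  simp only [jac3, hfg.fderiv_eq]

lemma trace_jac3_eq_sum {f : V3 → V3} {X : V3} (hf : DifferentiableAt ℝ f X) :
    (jac3 f X).trace = ∑ i, fderiv ℝ (fun X' => f X' i) X (e3 i) := by
  simp [Matrix.trace, jac3, fderiv_apply hf]

lemma image_mem_nhds_of_det_jac3_ne_zero {x : V3 → V3} {X : V3} {s : Set V3}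
    (hx : ContDiffAt ℝ 1 x X) (hJ : (jac3 x X).det ≠ 0) (hs : s ∈ 𝓝 X) :
    x '' s ∈ 𝓝 (x X) := by
  have hunit : IsUnit (fderiv ℝ x X : V3 →ₗ[ℝ] V3) := by
    rw [LinearMap.isUnit_iff_isUnit_det, ← LinearMap.det_toMatrix', ← jac3_eq_toMatrix']
    exact hJ.isUnit
  have hsurj : (fderiv ℝ x X).range = ⊤ :=
    LinearMap.range_eq_top.2 ((Module.End.isUnit_iff _).1 hunit).2
  rw [← (hx.hasStrictFDerivAt one_ne_zero).map_nhds_eq_of_surj hsurj]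
  exact image_mem_map hs

noncomputable def colDiv (A : V3 → Mat3) (X : V3) : V3 :=
  fun j => ∑ i, fderiv ℝ (fun X' => A X' i j) X (e3 i)

lemma trace_jac3_mulVec {A : V3 → Mat3} {g : V3 → V3} {X : V3}
    (hA : ∀ i j, DifferentiableAt ℝ (fun X' => A X' i j) X) (hg : DifferentiableAt ℝ g X) :
    (jac3 (fun X' => A X' *ᵥ g X') X).trace = colDiv A X ⬝ᵥ g X + (A X * jac3 g X).trace := by
  have hgj : ∀ j, DifferentiableAt ℝ (fun X' => g X' j) X := differentiableAt_pi.1 hg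
  have hterm : ∀ i j, DifferentiableAt ℝ (fun X' => A X' i j * g X' j) X :=
    fun i j => (hA i j).mul (hgj j)
  have hAg : ∀ i, DifferentiableAt ℝ (fun X' => (A X' *ᵥ g X') i) X := fun i => by
    simpa only [Matrix.mulVec, dotProduct] using DifferentiableAt.fun_sum fun j _ => hterm i j
  rw [trace_jac3_eq_sum (differentiableAt_pi.2 hAg)]
  simp only [Matrix.mulVec, dotProduct, fderiv_fun_sum (fun j _ => hterm _ j), FunLike.coe_sum,
    Finset.sum_apply, fderiv_fun_mul (hA _ _) (hgj _)]
  simp only [fderiv_apply hg, _root_.add_apply, _root_.smul_apply, ContinuousLinearMap.comp_apply,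
    ContinuousLinearMap.proj_apply, smul_eq_mul, Finset.sum_add_distrib, colDiv, Finset.sum_mul,
    Matrix.trace, jac3, Matrix.diag_apply, Matrix.mul_apply, Matrix.of_apply]
  rw [add_comm, Finset.sum_comm (f := fun i j => g X j * _)]
  simp only [mul_comm]

lemma hasFDerivAt_jac3_apply {x : V3 → V3} {X : V3} (hx : DifferentiableAt ℝ (fderiv ℝ x) X)
    (a k : Fin 3) :
    HasFDerivAt (fun X' => jac3 x X' a k) ((ContinuousLinearMap.proj a).comp
      ((ContinuousLinearMap.apply ℝ V3 (e3 k)).comp (fderiv ℝ (fderiv ℝ x) X))) X :=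
  ((ContinuousLinearMap.proj a).comp (ContinuousLinearMap.apply ℝ V3 (e3 k))).hasFDerivAt.comp X
    hx.hasFDerivAt

lemma differentiableAt_adjugate_jac3_apply {x : V3 → V3} {X : V3}
    (hx : DifferentiableAt ℝ (fderiv ℝ x) X) (i j : Fin 3) :
    DifferentiableAt ℝ (fun X' => (jac3 x X').adjugate i j) X := by
  have h := fun a k => (hasFDerivAt_jac3_apply hx a k).differentiableAt
  simp only [adjugate_fin_three_apply]
  exact ((h _ _).mul (h _ _)).sub ((h _ _).mul (h _ _))

lemma colDiv_adjugate_jac3 {x : V3 → V3} {X : V3} (hx : ContDiffAt ℝ 2 x X) :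
    colDiv (fun X' => (jac3 x X').adjugate) X = 0 := by
  have hx' : DifferentiableAt ℝ (fderiv ℝ x) X :=
    (hx.fderiv_right (m := 1) le_rfl).differentiableAt one_ne_zero
  have hsymm : ∀ v w c, fderiv ℝ (fderiv ℝ x) X v w c = fderiv ℝ (fderiv ℝ x) X w v c :=
    fun v w c => congrFun ((hx.isSymmSndFDerivAt (by simp)).eq v w) c
  have h := hasFDerivAt_jac3_apply hx'
  funext j
  simp only [colDiv, adjugate_fin_three_apply]
  rw [Finset.sum_congr rfl fun i _ => congrArg (fun L => L (e3 i))
    (((h (j + 1) (i + 1)).fun_mul (h (j + 2) (i + 2))).fun_sub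
      ((h (j + 1) (i + 2)).fun_mul (h (j + 2) (i + 1)))).fderiv]
  simp only [jac3, Matrix.of_apply, _root_.sub_apply, _root_.add_apply, _root_.smul_apply,
    ContinuousLinearMap.comp_apply, ContinuousLinearMap.apply_apply, ContinuousLinearMap.proj_apply,
    smul_eq_mul, Fin.sum_univ_three, zero_add, Fin.reduceAdd, Pi.zero_apply]
  simp only [hsymm (e3 1) (e3 0), hsymm (e3 2) (e3 0), hsymm (e3 2) (e3 1)]
  ring

theorem piola_divergence_identity_general
    (Ω : Set V3) (hΩ : IsOpen Ω)
    (x : V3 → V3) (hx : ContDiffOn ℝ 2 x Ω)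
    (hJ : ∀ X ∈ Ω, 0 < (jac3 x X).det)
    (h : V3 → V3) (hh : ContDiffOn ℝ 1 h (x '' Ω)) :
    ∀ X ∈ Ω,
      (jac3 (fun X' : V3 =>
          (jac3 x X').det • ((jac3 x X')⁻¹).mulVec (h (x X'))) X).trace
        = (jac3 x X).det * (jac3 h (x X)).trace := by
  intro X hX
  have hΩX : Ω ∈ 𝓝 X := hΩ.mem_nhds hX
  have hx2 : ContDiffAt ℝ 2 x X := hx.contDiffAt hΩX
  have hdx : DifferentiableAt ℝ x X := hx2.differentiableAt two_ne_zero
  have hdx' : DifferentiableAt ℝ (fderiv ℝ x) X :=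
    (hx2.fderiv_right (m := 1) le_rfl).differentiableAt one_ne_zero
  have hdh : DifferentiableAt ℝ h (x X) :=
    (hh.contDiffAt (image_mem_nhds_of_det_jac3_ne_zero (hx2.of_le one_le_two)
      (hJ X hX).ne' hΩX)).differentiableAt one_ne_zero
  have hadj : (fun X' => (jac3 x X').det • ((jac3 x X')⁻¹).mulVec (h (x X')))
      =ᶠ[𝓝 X] fun X' => (jac3 x X').adjugate *ᵥ h (x X') :=
    eventually_of_mem hΩX fun X' hX' =>
      (Matrix.det_smul_inv_mulVec_eq_cramer _ _ (hJ X' hX').ne'.isUnit).trans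
        (Matrix.cramer_eq_adjugate_mulVec _ _)
  rw [hadj.jac3_eq, trace_jac3_mulVec (g := fun X' => h (x X'))
      (differentiableAt_adjugate_jac3_apply hdx') (hdh.comp X hdx),
    colDiv_adjugate_jac3 hx2, zero_dotProduct, zero_add, jac3_comp hdh hdx,
    trace_adjugate_mul_mul]

/-- **Piola divergence identity (equation (13)).**
For a C² injective deformation `x` with `J = det Dx > 0` and a C¹ spatial field `h`,
the referential field `H = J (Dx)⁻¹ (h ∘ x)` satisfies `Div H = J · (div h) ∘ x`. -/
theorem piola_divergence_identity
    (Ω : Set V3) (hΩ : IsOpen Ω)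
    (x : V3 → V3) (hx : ContDiffOn ℝ 2 x Ω) (hinj : Set.InjOn x Ω)
    (hJ : ∀ X ∈ Ω, 0 < (jac3 x X).det)
    (h : V3 → V3) (hh : ContDiffOn ℝ 1 h (x '' Ω)) :
    ∀ X ∈ Ω,
      (jac3 (fun X' : V3 =>
          (jac3 x X').det • ((jac3 x X')⁻¹).mulVec (h (x X'))) X).trace
        = (jac3 x X).det * (jac3 h (x X)).trace :=
  piola_divergence_identity_general Ω hΩ x hx hJ h hh
end
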